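/- arXiv:1510.02515 — 6 statements merged into one kernel-verified Lean document; each statement's English description precedes it below -/
import Mathlib

section
/- If A is an n×n skew-symmetric matrix, then for every subset S of {1,...,n} of odd cardinality, the cycle-sum C_S(A) equals zero. -/
open scoped Classical

/-- The cycle-sum `C_S(A)`: sum over all cyclic orderings of `S` of the
corresponding cyclic products of entries of `A`. -/
noncomputable def cycleSum {n : ℕ} (A : Matrix (Fin n) (Fin n) ℂ) (S : Finset (Fin n)) : ℂ :=
  ∑ σ ∈ Finset.univ.filter
      (fun σ : Equiv.Perm (Fin n) =>
        σ.IsCycleOn (S : Set (Fin n)) ∧ ∀ i ∉ S, σ i = i),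
    ∏ i ∈ S, A i (σ i)

/-- The principal minor of `A` with row and column set `S`. -/
noncomputable def pminor {n : ℕ} (A : Matrix (Fin n) (Fin n) ℂ) (S : Finset (Fin n)) : ℂ :=
  (A.submatrix (fun i : S => (i : Fin n)) (fun i : S => (i : Fin n))).det

/-!
Reversing the orientation of a cycle `σ` on `S` gives the cycle `σ⁻¹` on `S`, and by
skew-symmetry its product `∏ A i (σ⁻¹ i) = ∏ A (σ j) j` picks up a sign `(-1) ^ #S = -1`.
So inversion is a bijection of the index set of `C_S(A)` that negates each summand,
whence `C_S(A) = -C_S(A)`.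
-/

open Finset
open scoped Matrix

theorem Matrix.prod_apply_perm_inv_of_transpose_eq_neg {ι R : Type*} [CommRing R]
    {A : Matrix ι ι R} (hA : Aᵀ = -A) {s : Finset ι} (hs : Odd #s) {σ : Equiv.Perm ι}
    (hσ : {a | σ a ≠ a} ⊆ s) :
    ∏ i ∈ s, A i (σ⁻¹ i) = -∏ i ∈ s, A i (σ i) :=
  calc ∏ i ∈ s, A i (σ⁻¹ i) = ∏ i ∈ s, A (σ i) i := (σ.prod_comp' s A hσ).symm
    _ = ∏ i ∈ s, (-1) * A i (σ i) :=
      prod_congr rfl fun i _ => by rw [neg_one_mul]; exact congrFun (congrFun hA i) (σ i)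
    _ = -∏ i ∈ s, A i (σ i) := by rw [prod_mul_distrib, prod_const, hs.neg_one_pow, neg_one_mul]

theorem cycleSum_eq_sum_inv {n : ℕ} (A : Matrix (Fin n) (Fin n) ℂ) (S : Finset (Fin n)) :
    cycleSum A S = ∑ σ ∈ univ.filter
      (fun σ : Equiv.Perm (Fin n) => σ.IsCycleOn (S : Set (Fin n)) ∧ ∀ i ∉ S, σ i = i),
      ∏ i ∈ S, A i (σ⁻¹ i) := by
  have inv_mem : ∀ σ : Equiv.Perm (Fin n), σ.IsCycleOn (S : Set (Fin n)) ∧ (∀ i ∉ S, σ i = i) →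
      σ⁻¹.IsCycleOn (S : Set (Fin n)) ∧ ∀ i ∉ S, σ⁻¹ i = i :=
    fun σ ⟨hcyc, hfix⟩ => ⟨hcyc.inv, fun i hi => Equiv.Perm.inv_eq_iff_eq.mpr (hfix i hi).symm⟩
  refine sum_nbij' (·⁻¹) (·⁻¹) ?_ ?_ ?_ ?_ ?_ <;> simp_all

/-- Odd cycle-sums of a skew-symmetric matrix vanish. -/
theorem stmt1 (n : ℕ) (A : Matrix (Fin n) (Fin n) ℂ) (hA : A.transpose = -A)
    (S : Finset (Fin n)) (hS : Odd S.card) :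
    cycleSum A S = 0 := by
  have hneg : cycleSum A S = -cycleSum A S := calc
    cycleSum A S = _ := cycleSum_eq_sum_inv A S
    _ = -cycleSum A S := by
      rw [cycleSum, ← sum_neg_distrib]
      refine sum_congr rfl fun σ hσ => A.prod_apply_perm_inv_of_transpose_eq_neg hA hS ?_
      intro i hi
      by_contra hiS
      exact hi ((mem_filter.mp hσ).2.2 i hiS)
  exact self_eq_neg.mp hneg
end

section
/- For every n×n matrix A and every subset S of {1,...,n}, the principal minor satisfies D_S(A) = Σ_{partitions S_1⊔⋯⊔S_k = S} (-1)^{|S|-k} C_{S_1}(A)⋯C_{S_k}(A), where the sum is over all set-partitions of S into nonempty blocks. -/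
/-!
Expand the principal minor as a sum over the permutations `σ` of `S`. The orbits of such a `σ`
form a set partition of `S`, and `σ` is the commuting product of its restrictions to the blocks,
each a cycle on its block; conversely, cycles on the blocks of any partition glue to a permutation
with exactly these orbits. A cycle on a block `T` has sign `(-1)^(|T|-1)`, so the sign of `σ`
depends only on its partition into `k` blocks and equals `(-1)^(|S|-k)`.
-/

open scoped Classical

open Finset Equiv Equiv.Perm

namespace Equiv.Perm

variable {α : Type*} {f g : Perm α} {a b : α}

theorem pow_apply_eq_of_eqOn {s : Set α} (hf : Set.MapsTo f s s) (h : Set.EqOn f g s) (n : ℕ)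
    {x : α} (hx : x ∈ s) : (g ^ n) x = (f ^ n) x := by
  induction n generalizing x with
  | zero => rfl
  | succ n ih => rw [pow_succ, mul_apply, pow_succ, mul_apply, ← h hx, ih (hf hx)]

theorem IsCycleOn.congr {s : Finset α} (hf : f.IsCycleOn s) (h : Set.EqOn f g s) :
    g.IsCycleOn s := by
  refine ⟨hf.1.congr h, fun x hx y hy => ?_⟩
  obtain ⟨n, rfl⟩ := hf.exists_pow_eq' s.finite_toSet hx hy
  exact ⟨n, by rw [zpow_natCast, pow_apply_eq_of_eqOn hf.1.mapsTo h n hx]⟩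

theorem IsCycleOn.sameCycle_iff [Finite α] {s : Set α} (hf : f.IsCycleOn s) (ha : a ∈ s) :
    f.SameCycle a b ↔ b ∈ s := by
  refine ⟨fun h => ?_, fun hb => hf.2 ha hb⟩
  obtain ⟨n, rfl⟩ := h.exists_nat_pow_eq
  rw [coe_pow]
  exact hf.1.mapsTo.iterate n ha

variable [DecidableEq α] [Fintype α]

theorem IsCycleOn.sign {s : Finset α} (hf : f.IsCycleOn s) (hsupp : f.support ⊆ s)
    (hs : s.Nonempty) : sign f = (-1) ^ (#s - 1) := by
  obtain ⟨a, rfl⟩ | hnt := hs.exists_eq_singleton_or_nontrivial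
  · have : f = 1 := by
      ext x
      by_cases hx : x = a
      · subst hx; simpa using hf
      · exact notMem_support.1 fun h => hx (by simpa using hsupp h)
    simp [this]
  · have hsupp' : f.support = s :=
      hsupp.antisymm fun x hx => mem_support.2 (hf.apply_ne hnt hx)
    have hcyc : f.IsCycle := isCycle_iff_exists_isCycleOn.2
      ⟨s, hnt, hf, fun x hx => hsupp (mem_support.2 hx)⟩
    rw [hcyc.sign, hsupp', ← Nat.sub_add_cancel hs.card_pos, pow_succ]
    simp

theorem noncommProd_apply_of_forall_ne {ι : Type*} [DecidableEq ι] {s : Finset ι}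
    {f : ι → Perm α} (hs : (s : Set ι).Pairwise fun i j => (f i).Disjoint (f j)) {i : ι}
    (hi : i ∈ s) {x : α} (hx : ∀ j ∈ s, j ≠ i → x ∉ (f j).support) :
    s.noncommProd f (hs.imp fun _ _ => Disjoint.commute) x = f i x := by
  rw [← s.mul_noncommProd_erase hi, mul_apply]
  congr 1
  rw [← notMem_support, support_noncommProd (hs.mono (s.erase_subset i))]
  simp only [mem_biUnion, mem_erase, not_exists, not_and]
  exact fun j ⟨hji, hj⟩ => hx j hj hji

noncomputable def cyclesOn (T : Finset α) : Finset (Perm α) :=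
  {τ | τ.IsCycleOn T ∧ τ.support ⊆ T}

theorem mem_cyclesOn {τ : Perm α} {T : Finset α} :
    τ ∈ cyclesOn T ↔ τ.IsCycleOn T ∧ τ.support ⊆ T := by
  simp [cyclesOn]

def cyclePartition (σ : Perm α) (S : Finset α) : Finpartition S :=
  letI : DecidableRel (SameCycle.setoid σ) := inferInstanceAs (DecidableRel σ.SameCycle)
  Finpartition.ofSetSetoid (SameCycle.setoid σ) S

variable {σ : Perm α} {S : Finset α}

theorem mem_cyclePartition_parts {T : Finset α} :
    T ∈ (σ.cyclePartition S).parts ↔ ∃ a ∈ S, {b ∈ S | σ.SameCycle a b} = T := by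
  simp [cyclePartition, Finpartition.ofSetSetoid_parts, SameCycle.setoid]

theorem isCycleOn_of_mem_cyclePartition (hσ : σ.support ⊆ S) {T : Finset α}
    (hT : T ∈ (σ.cyclePartition S).parts) : σ.IsCycleOn T := by
  obtain ⟨a, -, rfl⟩ := mem_cyclePartition_parts.1 hT
  have hmaps : Set.MapsTo σ (↑{b ∈ S | σ.SameCycle a b}) (↑{b ∈ S | σ.SameCycle a b}) := by
    intro b hb
    simp only [coe_filter, Set.mem_ofPred_eq] at hb ⊢
    refine ⟨?_, sameCycle_apply_right.2 hb.2⟩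
    by_cases hbσ : b ∈ σ.support
    · exact hσ (apply_mem_support.2 hbσ)
    · rw [notMem_support.1 hbσ]; exact hb.1
  refine ⟨(Set.Finite.injOn_iff_bijOn_of_mapsTo (finite_toSet _) hmaps).1 σ.injective.injOn,
    fun x hx y hy => ?_⟩
  simp only [coe_filter, Set.mem_ofPred_eq] at hx hy
  exact hx.2.symm.trans hy.2

theorem cyclePartition_eq_of_isCycleOn {P : Finpartition S}
    (h : ∀ T ∈ P.parts, σ.IsCycleOn T) : σ.cyclePartition S = P := by
  have hpart : ∀ a ∈ S, {b ∈ S | σ.SameCycle a b} = P.part a := fun a ha => by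
    ext b
    rw [mem_filter, (h _ (P.part_mem.2 ha)).sameCycle_iff (P.mem_part ha)]
    exact ⟨And.right, fun hb => ⟨P.part_subset a hb, hb⟩⟩
  ext T
  rw [mem_cyclePartition_parts]
  constructor
  · rintro ⟨a, ha, rfl⟩
    exact hpart a ha ▸ P.part_mem.2 ha
  · intro hT
    obtain ⟨a, haT⟩ := P.nonempty_of_mem_parts hT
    have ha := P.le hT haT
    exact ⟨a, ha, (hpart a ha).trans (P.part_eq_of_mem hT haT)⟩

theorem cyclePartition_eq_iff (hσ : σ.support ⊆ S) {P : Finpartition S} :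
    σ.cyclePartition S = P ↔ ∀ T ∈ P.parts, σ.IsCycleOn T :=
  ⟨fun h => h ▸ fun _ => isCycleOn_of_mem_cyclePartition hσ, cyclePartition_eq_of_isCycleOn⟩

end Equiv.Perm

namespace Finpartition

variable {α : Type*} [DecidableEq α] {S : Finset α} (P : Finpartition S)

theorem prod_prod_parts {M : Type*} [CommMonoid M] (f : α → M) :
    ∏ T ∈ P.parts, ∏ i ∈ T, f i = ∏ i ∈ S, f i :=
  (prod_biUnion P.disjoint).symm.trans (by rw [P.biUnion_parts])

theorem sum_card_sub_one_parts : ∑ T ∈ P.parts, (#T - 1) = #S - #P.parts := by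
  rw [sum_tsub_distrib _ fun T hT => (P.nonempty_of_mem_parts hT).card_pos, P.sum_card_parts,
    card_eq_sum_ones P.parts]

section Restrict

variable {σ : Perm α} (h : ∀ T ∈ P.parts, ∀ x, σ x ∈ T ↔ x ∈ T)

def restrictPerm : ∀ T ∈ P.parts, Perm α :=
  fun T hT => ofSubtype (σ.subtypePerm (h T hT))

variable {T : Finset α} (hT : T ∈ P.parts) {x : α}

theorem restrictPerm_apply (hx : x ∈ T) : P.restrictPerm h T hT x = σ x :=
  ofSubtype_subtypePerm_of_mem _ hx

theorem restrictPerm_apply_of_notMem (hx : x ∉ T) : P.restrictPerm h T hT x = x :=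
  ofSubtype_subtypePerm_of_not_mem _ hx

end Restrict

variable [Fintype α]

theorem support_restrictPerm_subset {σ : Perm α} (h : ∀ T ∈ P.parts, ∀ x, σ x ∈ T ↔ x ∈ T)
    (T : Finset α) (hT : T ∈ P.parts) : (P.restrictPerm h T hT).support ⊆ T := fun x hx => by
  by_contra hxT
  exact mem_support.1 hx (P.restrictPerm_apply_of_notMem h hT hxT)

variable {g : ∀ T ∈ P.parts, Perm α}

theorem pairwise_disjoint_of_support_subset (hg : ∀ T hT, (g T hT).support ⊆ T) :
    (P.parts.attach : Set P.parts).Pairwise fun T U => (g T.1 T.2).Disjoint (g U.1 U.2) := by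
  intro T _ U _ hTU
  rw [disjoint_iff_disjoint_support]
  exact (P.disjoint T.2 U.2 (Subtype.coe_ne_coe.2 hTU)).mono (hg _ _) (hg _ _)

variable (hg : ∀ T hT, (g T hT).support ⊆ T)

def gluePerm : Perm α :=
  P.parts.attach.noncommProd (fun T => g T.1 T.2)
    ((P.pairwise_disjoint_of_support_subset hg).imp fun _ _ => Disjoint.commute)

theorem gluePerm_apply {T : Finset α} (hT : T ∈ P.parts) {x : α} (hx : x ∈ T) :
    P.gluePerm hg x = g T hT x := by
  refine noncommProd_apply_of_forall_ne (P.pairwise_disjoint_of_support_subset hg)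
    (mem_attach _ ⟨T, hT⟩) fun U _ hUT hxU => hUT ?_
  exact Subtype.ext (P.eq_of_mem_parts U.2 hT (hg _ _ hxU) hx)

theorem support_gluePerm_subset : (P.gluePerm hg).support ⊆ S := by
  rw [gluePerm, support_noncommProd (P.pairwise_disjoint_of_support_subset hg)]
  exact biUnion_subset.2 fun T _ => (hg _ _).trans (P.le T.2)

theorem gluePerm_apply_of_notMem {x : α} (hx : x ∉ S) : P.gluePerm hg x = x :=
  notMem_support.1 fun h => hx (P.support_gluePerm_subset hg h)

theorem sign_gluePerm : sign (P.gluePerm hg) = ∏ T ∈ P.parts.attach, sign (g T.1 T.2) := by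
  rw [gluePerm, map_noncommProd, noncommProd_eq_prod]

theorem cyclePartition_gluePerm (hcyc : ∀ T hT, (g T hT).IsCycleOn T) :
    (P.gluePerm hg).cyclePartition S = P :=
  cyclePartition_eq_of_isCycleOn fun T hT =>
    (hcyc T hT).congr fun _ hx => (P.gluePerm_apply hg hT hx).symm

theorem restrictPerm_gluePerm (h : ∀ T ∈ P.parts, ∀ x, P.gluePerm hg x ∈ T ↔ x ∈ T) :
    P.restrictPerm h = g := by
  funext T hT
  ext x
  by_cases hx : x ∈ T
  · rw [P.restrictPerm_apply _ _ hx, P.gluePerm_apply _ hT hx]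
  · rw [P.restrictPerm_apply_of_notMem _ _ hx, notMem_support.1 fun h => hx (hg T hT h)]

variable {σ : Perm α} (h : ∀ T ∈ P.parts, ∀ x, σ x ∈ T ↔ x ∈ T)

theorem gluePerm_restrictPerm (hσ : σ.support ⊆ S) :
    P.gluePerm (P.support_restrictPerm_subset h) = σ := by
  ext x
  by_cases hx : x ∈ S
  · rw [P.gluePerm_apply _ (P.part_mem.2 hx) (P.mem_part hx),
      P.restrictPerm_apply _ _ (P.mem_part hx)]
  · rw [P.gluePerm_apply_of_notMem _ hx, notMem_support.1 fun h => hx (hσ h)]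

theorem restrictPerm_mem_cyclesOn {T : Finset α} (hT : T ∈ P.parts) (hσ : σ.IsCycleOn T) :
    P.restrictPerm h T hT ∈ cyclesOn T :=
  mem_cyclesOn.2 ⟨hσ.congr fun _ hx => (P.restrictPerm_apply h hT hx).symm,
    P.support_restrictPerm_subset h T hT⟩

end Finpartition

namespace Equiv.Perm

variable {α : Type*} [DecidableEq α] [Fintype α] {σ : Perm α} {S : Finset α}

theorem sign_eq_neg_one_pow_card_sub_card_cyclePartition (hσ : σ.support ⊆ S) :
    sign σ = (-1) ^ (#S - #(σ.cyclePartition S).parts) := by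
  set P := σ.cyclePartition S
  have hcyc : ∀ T ∈ P.parts, σ.IsCycleOn T := fun T hT => isCycleOn_of_mem_cyclePartition hσ hT
  have hinv : ∀ T ∈ P.parts, ∀ x, σ x ∈ T ↔ x ∈ T := fun T hT _ => (hcyc T hT).apply_mem_iff
  have hsign (T : P.parts) : sign (P.restrictPerm hinv T.1 T.2) = (-1) ^ (#T.1 - 1) :=
    (mem_cyclesOn.1 (P.restrictPerm_mem_cyclesOn hinv T.2 (hcyc T.1 T.2))).elim
      fun hc hs => hc.sign hs (P.nonempty_of_mem_parts T.2)
  rw [← P.gluePerm_restrictPerm hinv hσ, P.sign_gluePerm, prod_congr rfl fun T _ => hsign T,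
    prod_pow_eq_pow_sum, sum_attach P.parts fun T => #T - 1, P.sum_card_sub_one_parts]

theorem prod_sum_cyclesOn {R : Type*} [CommSemiring R] (P : Finpartition S) (f : α → α → R) :
    ∏ T ∈ P.parts, ∑ τ ∈ cyclesOn T, ∏ i ∈ T, f i (τ i) =
      ∑ σ ∈ {σ : Perm α | σ.support ⊆ S ∧ σ.cyclePartition S = P}, ∏ i ∈ S, f i (σ i) := by
  have isCycleOn {σ : Perm α} (hσ : σ.support ⊆ S ∧ σ.cyclePartition S = P)
      {T : Finset α} (hT : T ∈ P.parts) : σ.IsCycleOn T :=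
    (cyclePartition_eq_iff hσ.1).1 hσ.2 T hT
  have family_mem {g : ∀ T ∈ P.parts, Perm α} (hg : g ∈ P.parts.pi cyclesOn) {T : Finset α}
      (hT : T ∈ P.parts) : (g T hT).IsCycleOn T ∧ (g T hT).support ⊆ T :=
    mem_cyclesOn.1 (mem_pi.1 hg T hT)
  rw [prod_sum]
  refine sum_bij' (fun g hg => P.gluePerm fun T hT => (family_mem hg hT).2)
    (fun σ hσ => P.restrictPerm fun T hT _ => (isCycleOn (mem_filter.1 hσ).2 hT).apply_mem_iff)
    (fun g hg => ?_) (fun σ hσ => ?_) (fun g hg => ?_) (fun σ hσ => ?_) (fun g hg => ?_)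
  · exact mem_filter.2 ⟨mem_univ _, P.support_gluePerm_subset _,
      P.cyclePartition_gluePerm _ fun T hT => (family_mem hg hT).1⟩
  · exact mem_pi.2 fun T hT => P.restrictPerm_mem_cyclesOn _ hT (isCycleOn (mem_filter.1 hσ).2 hT)
  · exact P.restrictPerm_gluePerm _ _
  · exact P.gluePerm_restrictPerm _ (mem_filter.1 hσ).2.1
  · calc _ = ∏ T ∈ P.parts.attach, ∏ i ∈ T.1, f i (P.gluePerm _ i) :=
          prod_congr rfl fun T _ => prod_congr rfl fun i hi => by rw [P.gluePerm_apply _ T.2 hi]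
      _ = _ := by
        rw [prod_attach P.parts (fun T => ∏ i ∈ T, f i (P.gluePerm _ i))]
        exact P.prod_prod_parts fun i => f i (P.gluePerm _ i)

end Equiv.Perm

theorem Matrix.det_submatrix_coe_eq_sum {α R : Type*} [DecidableEq α] [Fintype α] [CommRing R]
    (A : Matrix α α R) (S : Finset α) :
    (A.submatrix ((↑) : S → α) (↑)).det =
      ∑ σ ∈ {σ : Perm α | σ.support ⊆ S}, sign σ • ∏ i ∈ S, A i (σ i) := by
  rw [← det_transpose, det_apply]
  refine sum_nbij ofSubtype (fun τ _ => ?_) ofSubtype_injective.injOn (fun σ hσ => ?_)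
    fun τ _ => ?_
  · exact mem_filter.2 ⟨mem_univ _, mem_range_ofSubtype_iff.1 ⟨τ, rfl⟩⟩
  · obtain ⟨τ, rfl⟩ := (mem_range_ofSubtype_iff (p := (· ∈ S))).2 (mem_filter.1 hσ).2
    exact ⟨τ, mem_coe.2 (mem_univ τ), rfl⟩
  · rw [sign_ofSubtype, ← prod_coe_sort S]
    simp only [transpose_apply, submatrix_apply, ofSubtype_apply_coe]

theorem cycleSum_eq_sum_cyclesOn {n : ℕ} (A : Matrix (Fin n) (Fin n) ℂ) (T : Finset (Fin n)) :
    cycleSum A T = ∑ τ ∈ cyclesOn T, ∏ i ∈ T, A i (τ i) := by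
  rw [cycleSum]
  refine sum_congr (ext fun τ => ?_) fun _ _ => rfl
  rw [mem_filter, mem_cyclesOn]
  simp only [mem_univ, true_and, subset_iff, mem_support, not_imp_comm]

/-- Principal minors in terms of cycle-sums:
`D_S(A) = Σ_{set-partitions S₁⊔⋯⊔S_k of S} (-1)^(|S|-k) C_{S₁}(A)⋯C_{S_k}(A)`. -/
theorem stmt8 (n : ℕ) (A : Matrix (Fin n) (Fin n) ℂ) (S : Finset (Fin n)) :
    pminor A S =
      ∑ P : Finpartition S,
        (-1 : ℂ) ^ (S.card - P.parts.card) * ∏ T ∈ P.parts, cycleSum A T := by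
  rw [pminor, Matrix.det_submatrix_coe_eq_sum, ← sum_fiberwise _ (cyclePartition · S)]
  refine sum_congr rfl fun P _ => ?_
  simp only [cycleSum_eq_sum_cyclesOn]
  rw [prod_sum_cyclesOn P A, filter_filter, mul_sum]
  refine sum_congr rfl fun σ hσ => ?_
  obtain ⟨hσS, rfl⟩ := (mem_filter.1 hσ).2
  rw [sign_eq_neg_one_pow_card_sub_card_cyclePartition hσS, Units.smul_def, zsmul_eq_mul]
  push_cast
  rfl
end

section
/- For any 4×4 matrix A, C_{{1,2,3,4}}(A) = -D_{{1,2,3,4}} + Σ over 3+1 splits of D_{S}D_{T} products + Σ over 2+2 splits − 2·Σ over 2+1+1 splits + 6·D_{{1}}D_{{2}}D_{{3}}D_{{4}}, i.e. C_{{1,2,3,4}}(A) = -D_{1234} + (D_{123}D_4 + D_{124}D_3 + D_{134}D_2 + D_{234}D_1) + (D_{12}D_{34} + D_{13}D_{24} + D_{14}D_{23}) − 2(D_{12}D_3D_4 + D_{13}D_2D_4 + D_{14}D_2D_3 + D_{23}D_1D_4 + D_{24}D_1D_3 + D_{34}D_1D_2) + 6 D_1D_2D_3D_4. -/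
open scoped Classical

section Aux

abbrev c1 : Equiv.Perm (Fin 4) := List.formPerm [0,1,2,3]
abbrev c2 : Equiv.Perm (Fin 4) := List.formPerm [0,1,3,2]
abbrev c3 : Equiv.Perm (Fin 4) := List.formPerm [0,2,1,3]
abbrev c4 : Equiv.Perm (Fin 4) := List.formPerm [0,2,3,1]
abbrev c5 : Equiv.Perm (Fin 4) := List.formPerm [0,3,1,2]
abbrev c6 : Equiv.Perm (Fin 4) := List.formPerm [0,3,2,1]

lemma aux_isCycleOn (l : List (Fin 4)) (hl : l.Nodup) (hm : ∀ x : Fin 4, x ∈ l) :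
    (List.formPerm l).IsCycleOn (({0,1,2,3} : Finset (Fin 4)) : Set (Fin 4)) := by
  have hset : ((({0,1,2,3} : Finset (Fin 4)) : Set (Fin 4))) = {a | a ∈ l} := by
    ext x
    simp only [Set.mem_setOf_eq, hm x, iff_true, Finset.coe_insert, Set.mem_insert_iff,
      Finset.coe_singleton, Set.mem_singleton_iff]
    fin_cases x <;> simp
  rw [hset]
  exact hl.isCycleOn_formPerm

lemma filter_eq :
    (Finset.univ.filter (fun σ : Equiv.Perm (Fin 4) =>
      σ.IsCycleOn (({0,1,2,3} : Finset (Fin 4)) : Set (Fin 4)) ∧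
        ∀ i ∉ ({0,1,2,3} : Finset (Fin 4)), σ i = i))
    = {c1, c2, c3, c4, c5, c6} := by
  have hs : ((({0,1,2,3} : Finset (Fin 4)) : Set (Fin 4))) = Set.univ := by
    ext x; simp; fin_cases x <;> simp
  ext σ
  simp only [Finset.mem_filter, Finset.mem_univ, true_and, Finset.mem_insert,
    Finset.mem_singleton]
  constructor
  · rintro ⟨hc, -⟩
    rw [hs] at hc
    have hne : ∀ i, σ i ≠ i := fun i =>
      hc.apply_ne ⟨0, trivial, 1, trivial, by decide⟩ trivial
    have hsq : σ * σ ≠ 1 := by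
      intro h
      have h2 : σ ^ (2 : ℤ) = 1 := by rwa [zpow_two]
      set b : Fin 4 := if σ 0 = 1 then 2 else 1 with hb
      have hb0 : b ≠ 0 := by by_cases h1 : σ 0 = 1 <;> simp [hb, h1]
      have hbs : b ≠ σ 0 := by
        by_cases h1 : σ 0 = 1
        · simp [hb, h1]
        · simp [hb, h1]; exact fun hh => h1 hh.symm
      obtain ⟨n, hn⟩ := hc.2 (Set.mem_univ 0) (Set.mem_univ b)
      rcases Int.even_or_odd n with ⟨k, rfl⟩ | ⟨k, rfl⟩
      · rw [show k + k = 2 * k by ring, zpow_mul, h2, one_zpow] at hn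
        exact hb0 hn.symm
      · rw [zpow_add, zpow_mul, h2, one_zpow, zpow_one, one_mul] at hn
        exact hbs hn.symm
    clear hc
    revert hne hsq
    revert σ
    decide
  · rintro (rfl | rfl | rfl | rfl | rfl | rfl) <;>
      exact ⟨aux_isCycleOn _ (by decide) (by decide), by decide⟩

variable (A : Matrix (Fin 4) (Fin 4) ℂ)

lemma pminor_single (a : Fin 4) : pminor A {a} = A a a := by
  let e : Fin 1 ≃ ↥({a} : Finset (Fin 4)) :=
    { toFun := fun _ => ⟨a, by simp⟩
      invFun := fun _ => 0
      left_inv := by intro x; fin_cases x <;> rfl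
      right_inv := by rintro ⟨x, hx⟩; simp at hx; subst hx; rfl }
  have h0 : ((e 0 : ↥({a} : Finset (Fin 4))) : Fin 4) = a := rfl
  rw [pminor, ← Matrix.det_submatrix_equiv_self e, Matrix.det_fin_one]
  simp [Matrix.submatrix_apply, h0]

lemma pminor_pair (a b : Fin 4) (hab : a ≠ b) :
    pminor A {a, b} = A a a * A b b - A a b * A b a := by
  let e : Fin 2 ≃ ↥({a, b} : Finset (Fin 4)) :=
    { toFun := ![⟨a, by simp⟩, ⟨b, by simp⟩]
      invFun := fun x => if (x : Fin 4) = a then 0 else 1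
      left_inv := by intro x; fin_cases x <;> simp [hab.symm]
      right_inv := by rintro ⟨x, hx⟩; simp at hx; rcases hx with rfl | rfl <;> simp [hab.symm] }
  have h0 : ((e 0 : ↥({a,b} : Finset (Fin 4))) : Fin 4) = a := rfl
  have h1 : ((e 1 : ↥({a,b} : Finset (Fin 4))) : Fin 4) = b := rfl
  rw [pminor, ← Matrix.det_submatrix_equiv_self e, Matrix.det_fin_two]
  simp [Matrix.submatrix_apply, h0, h1]

lemma pminor_triple (a b c : Fin 4) (hab : a ≠ b) (hac : a ≠ c) (hbc : b ≠ c) :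
    pminor A {a, b, c} = A a a * A b b * A c c - A a a * A b c * A c b - A a b * A b a * A c c
      + A a b * A b c * A c a + A a c * A b a * A c b - A a c * A b b * A c a := by
  let e : Fin 3 ≃ ↥({a, b, c} : Finset (Fin 4)) :=
    { toFun := ![⟨a, by simp⟩, ⟨b, by simp⟩, ⟨c, by simp⟩]
      invFun := fun x => if (x : Fin 4) = a then 0 else if (x : Fin 4) = b then 1 else 2
      left_inv := by intro x; fin_cases x <;> simp [hab.symm, hac.symm, hbc.symm]
      right_inv := by
        rintro ⟨x, hx⟩; simp at hx
        rcases hx with rfl | rfl | rfl <;> simp [hab.symm, hac.symm, hbc.symm] }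
  have h0 : ((e 0 : ↥({a,b,c} : Finset (Fin 4))) : Fin 4) = a := rfl
  have h1 : ((e 1 : ↥({a,b,c} : Finset (Fin 4))) : Fin 4) = b := rfl
  have h2 : ((e 2 : ↥({a,b,c} : Finset (Fin 4))) : Fin 4) = c := rfl
  rw [pminor, ← Matrix.det_submatrix_equiv_self e, Matrix.det_fin_three]
  simp only [Matrix.submatrix_apply, h0, h1, h2]

lemma pminor_univ : pminor A {0,1,2,3} = A.det := by
  let e : Fin 4 ≃ ↥({0,1,2,3} : Finset (Fin 4)) :=
    { toFun := fun i => ⟨i, by fin_cases i <;> simp⟩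
      invFun := fun x => (x : Fin 4)
      left_inv := fun x => rfl
      right_inv := by rintro ⟨x, hx⟩; rfl }
  rw [pminor, ← Matrix.det_submatrix_equiv_self e]
  congr 1

lemma det_fin_four' :
    A.det =
      A 0 0 * (A 1 1 * (A 2 2 * A 3 3 - A 2 3 * A 3 2) - A 1 2 * (A 2 1 * A 3 3 - A 2 3 * A 3 1)
        + A 1 3 * (A 2 1 * A 3 2 - A 2 2 * A 3 1))
      - A 0 1 * (A 1 0 * (A 2 2 * A 3 3 - A 2 3 * A 3 2) - A 1 2 * (A 2 0 * A 3 3 - A 2 3 * A 3 0)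
        + A 1 3 * (A 2 0 * A 3 2 - A 2 2 * A 3 0))
      + A 0 2 * (A 1 0 * (A 2 1 * A 3 3 - A 2 3 * A 3 1) - A 1 1 * (A 2 0 * A 3 3 - A 2 3 * A 3 0)
        + A 1 3 * (A 2 0 * A 3 1 - A 2 1 * A 3 0))
      - A 0 3 * (A 1 0 * (A 2 1 * A 3 2 - A 2 2 * A 3 1) - A 1 1 * (A 2 0 * A 3 2 - A 2 2 * A 3 0)
        + A 1 2 * (A 2 0 * A 3 1 - A 2 1 * A 3 0)) := by
  rw [Matrix.det_succ_row_zero]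
  simp [Fin.sum_univ_succ, Matrix.det_fin_three, Matrix.submatrix_apply,
    show (Fin.succAbove 1 2 : Fin 4) = 3 from rfl, show (Fin.succAbove 2 2 : Fin 4) = 3 from rfl,
    show (Fin.succAbove 3 2 : Fin 4) = 2 from rfl]
  ring

end Aux

/-- Explicit expression of the top cycle-sum of a `4×4` matrix in terms of its
principal minors (indices `1,2,3,4` are written `0,1,2,3`). -/
theorem stmt10 (A : Matrix (Fin 4) (Fin 4) ℂ) :
    cycleSum A {0, 1, 2, 3} =
      -pminor A {0, 1, 2, 3}
      + (pminor A {0, 1, 2} * pminor A {3} + pminor A {0, 1, 3} * pminor A {2}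
          + pminor A {0, 2, 3} * pminor A {1} + pminor A {1, 2, 3} * pminor A {0})
      + (pminor A {0, 1} * pminor A {2, 3} + pminor A {0, 2} * pminor A {1, 3}
          + pminor A {0, 3} * pminor A {1, 2})
      - 2 * (pminor A {0, 1} * pminor A {2} * pminor A {3}
          + pminor A {0, 2} * pminor A {1} * pminor A {3}
          + pminor A {0, 3} * pminor A {1} * pminor A {2}
          + pminor A {1, 2} * pminor A {0} * pminor A {3}
          + pminor A {1, 3} * pminor A {0} * pminor A {2}
          + pminor A {2, 3} * pminor A {0} * pminor A {1})
      + 6 * (pminor A {0} * pminor A {1} * pminor A {2} * pminor A {3}) := by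
  rw [cycleSum, filter_eq]
  rw [Finset.sum_insert (by decide), Finset.sum_insert (by decide),
    Finset.sum_insert (by decide), Finset.sum_insert (by decide),
    Finset.sum_insert (by decide), Finset.sum_singleton]
  rw [pminor_univ, det_fin_four',
    pminor_single A 0, pminor_single A 1, pminor_single A 2, pminor_single A 3,
    pminor_pair A 0 1 (by decide), pminor_pair A 0 2 (by decide), pminor_pair A 0 3 (by decide),
    pminor_pair A 1 2 (by decide), pminor_pair A 1 3 (by decide), pminor_pair A 2 3 (by decide),
    pminor_triple A 0 1 2 (by decide) (by decide) (by decide),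
    pminor_triple A 0 1 3 (by decide) (by decide) (by decide),
    pminor_triple A 0 2 3 (by decide) (by decide) (by decide),
    pminor_triple A 1 2 3 (by decide) (by decide) (by decide)]
  simp only [show ({0,1,2,3} : Finset (Fin 4)) = Finset.univ from by decide, Fin.prod_univ_four,
    show c1 0 = 1 from rfl, show c1 1 = 2 from rfl, show c1 2 = 3 from rfl, show c1 3 = 0 from rfl,
    show c2 0 = 1 from rfl, show c2 1 = 3 from rfl, show c2 2 = 0 from rfl, show c2 3 = 2 from rfl,
    show c3 0 = 2 from rfl, show c3 1 = 3 from rfl, show c3 2 = 1 from rfl, show c3 3 = 0 from rfl,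
    show c4 0 = 2 from rfl, show c4 1 = 0 from rfl, show c4 2 = 3 from rfl, show c4 3 = 1 from rfl,
    show c5 0 = 3 from rfl, show c5 1 = 2 from rfl, show c5 2 = 0 from rfl, show c5 3 = 1 from rfl,
    show c6 0 = 3 from rfl, show c6 1 = 0 from rfl, show c6 2 = 1 from rfl, show c6 3 = 2 from rfl]
  ring
end

section
/- Let T_n(x) be the n×n Toeplitz matrix with (i,j) entry sgn(j−i)·x^{j−i−sgn(j−i)} (zero diagonal). For 2 ≤ s ≤ n and x ∉ {0, i, −i}, the leading principal minor det(T_s(x)) equals ((x²)^{s−1} + (−1)^s)/(x^{s−2}(x²+1)). Equivalently, (x²+1)·x^{s−2}·det(T_s(x)) = (x²)^{s−1} + (−1)^s. -/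
open scoped Classical

/-- The Toeplitz matrix `T_n(x)` with `(i,j)` entry `sgn(j-i)·x^(j-i-sgn(j-i))`,
i.e. `x^(j-i-1)` above the diagonal, `-(x⁻¹)^(i-j-1)` below, `0` on the diagonal. -/
noncomputable def toeplitzT (n : ℕ) (x : ℂ) : Matrix (Fin n) (Fin n) ℂ :=
  Matrix.of fun i j =>
    if (i : ℕ) < (j : ℕ) then x ^ ((j : ℕ) - (i : ℕ) - 1)
    else if (j : ℕ) < (i : ℕ) then -(x⁻¹) ^ ((i : ℕ) - (j : ℕ) - 1)
    else 0

namespace Stmt14Aux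

open Finset Matrix

/-- helper: a sum over `Fin s` with at most two nonzero terms. -/
lemma two_term {s : ℕ} (f : Fin s → ℂ) (a b : Fin s) (hab : a ≠ b)
    (h : ∀ k, k ≠ a → k ≠ b → f k = 0) : ∑ k, f k = f a + f b := by
  rw [← Finset.sum_subset (Finset.subset_univ ({a, b} : Finset (Fin s)))]
  · rw [Finset.sum_pair hab]
  · intro k _ hk
    simp only [Finset.mem_insert, Finset.mem_singleton, not_or] at hk
    exact h k hk.1 hk.2

/-- The elementary row-operation part `N`. -/
noncomputable def NN (m : ℕ) (x : ℂ) : Matrix (Fin (m+2)) (Fin (m+2)) ℂ :=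
  Matrix.of fun i j => if (j:ℕ) = (i:ℕ)+1 then -x else 0

/-- The column-operation matrix `U`. -/
noncomputable def UU (m : ℕ) (x : ℂ) : Matrix (Fin (m+2)) (Fin (m+2)) ℂ :=
  Matrix.of fun i j => if (i:ℕ) ≤ (j:ℕ) then (-x⁻¹)^((j:ℕ)-(i:ℕ)) else 0

/-- The intermediate matrix `B = (1+N)·T`. -/
noncomputable def BB (m : ℕ) (x : ℂ) : Matrix (Fin (m+2)) (Fin (m+2)) ℂ :=
  Matrix.of fun i j =>
    if (i:ℕ) ≤ m then
      (if (j:ℕ) = (i:ℕ) then x else if (j:ℕ) = (i:ℕ)+1 then 1 else 0)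
    else if (j:ℕ) ≤ m then -(x⁻¹)^(m-(j:ℕ)) else 0

lemma detE (m : ℕ) (x : ℂ) : ((1 : Matrix (Fin (m+2)) (Fin (m+2)) ℂ) + NN m x).det = 1 := by
  rw [Matrix.det_of_upperTriangular]
  · apply Finset.prod_eq_one
    intro i _
    have h2 : ¬ (i:ℕ) = (i:ℕ)+1 := by omega
    simp [Matrix.add_apply, Matrix.one_apply, NN, h2]
  · intro i j hij
    have hji : (j:ℕ) < (i:ℕ) := hij
    have h1 : ¬ i = j := by intro h; subst h; exact lt_irrefl _ hji
    have h2 : ¬ (j:ℕ) = (i:ℕ)+1 := by omega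
    simp [Matrix.add_apply, Matrix.one_apply, NN, h1, h2]

lemma detU (m : ℕ) (x : ℂ) : (UU m x).det = 1 := by
  rw [Matrix.det_of_upperTriangular]
  · apply Finset.prod_eq_one
    intro i _
    simp [UU]
  · intro i j hij
    have hij' : (j:ℕ) < (i:ℕ) := hij
    simp [UU]
    omega

lemma hB (m : ℕ) (x : ℂ) (hx : x ≠ 0) :
    ((1 : Matrix (Fin (m+2)) (Fin (m+2)) ℂ) + NN m x) * toeplitzT (m+2) x = BB m x := by
  ext i j
  rw [Matrix.add_mul, Matrix.one_mul, Matrix.add_apply]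
  by_cases hi : (i:ℕ) ≤ m
  · have h : (i:ℕ)+1 < m+2 := by omega
    have hN : (NN m x * toeplitzT (m+2) x) i j = -x * toeplitzT (m+2) x ⟨(i:ℕ)+1, h⟩ j := by
      rw [Matrix.mul_apply]
      rw [Finset.sum_eq_single (⟨(i:ℕ)+1, h⟩ : Fin (m+2))]
      · simp [NN]
      · intro k _ hk
        have : (k:ℕ) ≠ (i:ℕ)+1 := by
          intro hc; exact hk (Fin.ext hc)
        simp [NN, this]
      · simp
    rw [hN]
    simp only [toeplitzT, BB, Matrix.of_apply]
    rcases lt_trichotomy ((j:ℕ)) ((i:ℕ)) with hj | hj | hj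
    · -- below diagonal
      have e1 : ¬ (i:ℕ) < (j:ℕ) := by omega
      have e2 : ¬ ((⟨(i:ℕ)+1, h⟩ : Fin (m+2)) : ℕ) < (j:ℕ) := by simp; omega
      have e3 : (j:ℕ) < ((⟨(i:ℕ)+1, h⟩ : Fin (m+2)) : ℕ) := by simp; omega
      have e4 : (j:ℕ) ≠ (i:ℕ) := by omega
      have e5 : (j:ℕ) ≠ (i:ℕ)+1 := by omega
      rw [if_neg e1, if_pos hj, if_neg e2, if_pos e3, if_pos hi, if_neg e4, if_neg e5]
      have e6 : ((⟨(i:ℕ)+1, h⟩ : Fin (m+2)) : ℕ) - (j:ℕ) - 1 = ((i:ℕ) - (j:ℕ) - 1) + 1 := by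
        simp; omega
      rw [e6, pow_succ]
      field_simp
      ring
    · -- diagonal
      have e1 : ¬ (i:ℕ) < (j:ℕ) := by omega
      have e2 : ¬ (j:ℕ) < (i:ℕ) := by omega
      have e3 : (j:ℕ) < ((⟨(i:ℕ)+1, h⟩ : Fin (m+2)) : ℕ) := by simp; omega
      have e4 : ¬ ((⟨(i:ℕ)+1, h⟩ : Fin (m+2)) : ℕ) < (j:ℕ) := by simp; omega
      have e6 : ((⟨(i:ℕ)+1, h⟩ : Fin (m+2)) : ℕ) - (j:ℕ) - 1 = 0 := by simp; omega
      rw [if_neg e1, if_neg e2, if_neg e4, if_pos e3, e6, if_pos hi, if_pos hj]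
      simp
    · rcases Nat.lt_or_ge ((i:ℕ)+1) ((j:ℕ)) with hj2 | hj2
      · -- far above diagonal
        have e1 : (i:ℕ) < (j:ℕ) := hj
        have e2 : ((⟨(i:ℕ)+1, h⟩ : Fin (m+2)) : ℕ) < (j:ℕ) := by simp; omega
        have e4 : (j:ℕ) ≠ (i:ℕ) := by omega
        have e5 : (j:ℕ) ≠ (i:ℕ)+1 := by omega
        rw [if_pos e1, if_pos e2, if_pos hi, if_neg e4, if_neg e5]
        have e6 : (j:ℕ) - (i:ℕ) - 1 = ((j:ℕ) - ((⟨(i:ℕ)+1, h⟩ : Fin (m+2)) : ℕ) - 1) + 1 := by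
          simp; omega
        rw [e6, pow_succ]
        ring
      · -- superdiagonal j = i+1
        have hj3 : (j:ℕ) = (i:ℕ)+1 := by omega
        have e1 : (i:ℕ) < (j:ℕ) := hj
        have e2 : ¬ ((⟨(i:ℕ)+1, h⟩ : Fin (m+2)) : ℕ) < (j:ℕ) := by simp; omega
        have e3 : ¬ (j:ℕ) < ((⟨(i:ℕ)+1, h⟩ : Fin (m+2)) : ℕ) := by simp; omega
        have e4 : (j:ℕ) ≠ (i:ℕ) := by omega
        have e6 : (j:ℕ) - (i:ℕ) - 1 = 0 := by omega
        rw [if_pos e1, if_neg e2, if_neg e3, if_pos hi, if_neg e4, if_pos hj3, e6]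
        simp
  · -- last row: N part vanishes
    have hi' : (i:ℕ) = m+1 := by omega
    have hN : (NN m x * toeplitzT (m+2) x) i j = 0 := by
      rw [Matrix.mul_apply]
      apply Finset.sum_eq_zero
      intro k _
      have : (k:ℕ) ≠ (i:ℕ)+1 := by omega
      simp [NN, this]
    rw [hN, add_zero]
    simp only [toeplitzT, BB, Matrix.of_apply]
    have e1 : ¬ (i:ℕ) < (j:ℕ) := by omega
    rw [if_neg e1, if_neg (by omega : ¬ (i:ℕ) ≤ m)]
    rcases Nat.lt_or_ge ((j:ℕ)) ((i:ℕ)) with hj | hj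
    · have e2 : (j:ℕ) ≤ m := by omega
      have e3 : (i:ℕ) - (j:ℕ) - 1 = m - (j:ℕ) := by omega
      rw [if_pos hj, if_pos e2, e3]
    · have e2 : ¬ (j:ℕ) < (i:ℕ) := by omega
      have e3 : ¬ (j:ℕ) ≤ m := by omega
      rw [if_neg e2, if_neg e3]

lemma BU_entry_upper (m : ℕ) (x : ℂ) (hx : x ≠ 0) (i j : Fin (m+2)) (hij : (i:ℕ) < (j:ℕ)) :
    (BB m x * UU m x) i j = 0 := by
  have hi : (i:ℕ) ≤ m := by omega
  have h : (i:ℕ)+1 < m+2 := by omega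
  rw [Matrix.mul_apply]
  rw [two_term _ i ⟨(i:ℕ)+1, h⟩ (by intro hc; have := congrArg Fin.val hc; simp at this)]
  · have hBi : BB m x i i = x := by
      simp only [BB, Matrix.of_apply]; rw [if_pos hi]; simp
    have hUi : UU m x i j = (-x⁻¹)^((j:ℕ)-(i:ℕ)) := by
      simp only [UU, Matrix.of_apply]; rw [if_pos (le_of_lt hij)]
    have hBb : BB m x i ⟨(i:ℕ)+1, h⟩ = 1 := by
      simp only [BB, Matrix.of_apply, Fin.val_mk]
      rw [if_pos hi, if_neg (by omega : ¬ (i:ℕ)+1 = (i:ℕ))]; simp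
    have hUb : UU m x ⟨(i:ℕ)+1, h⟩ j = (-x⁻¹)^((j:ℕ)-((i:ℕ)+1)) := by
      simp only [UU, Matrix.of_apply, Fin.val_mk]
      rw [if_pos (by omega : (i:ℕ)+1 ≤ (j:ℕ))]
    rw [hBi, hUi, hBb, hUb]
    have e2 : (j:ℕ) - (i:ℕ) = ((j:ℕ) - ((i:ℕ)+1)) + 1 := by omega
    rw [e2, pow_succ]
    field_simp
    ring
  · intro k hk1 hk2
    have hk1' : ¬ (k:ℕ) = (i:ℕ) := fun hc => hk1 (Fin.ext hc)
    have hk2' : ¬ (k:ℕ) = (i:ℕ)+1 := fun hc => hk2 (Fin.ext hc)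
    simp only [BB, Matrix.of_apply]
    rw [if_pos hi, if_neg hk1', if_neg hk2', zero_mul]

lemma BU_diag (m : ℕ) (x : ℂ) (i : Fin (m+2)) (hi : (i:ℕ) ≤ m) :
    (BB m x * UU m x) i i = x := by
  have h : (i:ℕ)+1 < m+2 := by omega
  rw [Matrix.mul_apply]
  rw [two_term _ i ⟨(i:ℕ)+1, h⟩ (by intro hc; have := congrArg Fin.val hc; simp at this)]
  · have hBi : BB m x i i = x := by
      simp only [BB, Matrix.of_apply]; rw [if_pos hi]; simp
    have hUi : UU m x i i = 1 := by
      simp only [UU, Matrix.of_apply]; rw [if_pos (le_refl (i:ℕ))]; simp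
    have hUb : UU m x ⟨(i:ℕ)+1, h⟩ i = 0 := by
      simp only [UU, Matrix.of_apply, Fin.val_mk]
      rw [if_neg (by omega : ¬ (i:ℕ)+1 ≤ (i:ℕ))]
    rw [hBi, hUi, hUb, mul_zero, add_zero, mul_one]
  · intro k hk1 hk2
    have hk1' : ¬ (k:ℕ) = (i:ℕ) := fun hc => hk1 (Fin.ext hc)
    have hk2' : ¬ (k:ℕ) = (i:ℕ)+1 := fun hc => hk2 (Fin.ext hc)
    simp only [BB, Matrix.of_apply]
    rw [if_pos hi, if_neg hk1', if_neg hk2', zero_mul]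

lemma BU_last (m : ℕ) (x : ℂ) (hx : x ≠ 0) :
    (BB m x * UU m x) (Fin.last (m+1)) (Fin.last (m+1)) =
      x⁻¹ * ∑ t ∈ Finset.range (m+1), (-((x⁻¹)^2))^t := by
  rw [Matrix.mul_apply]
  have key : ∀ k : Fin (m+2), BB m x (Fin.last (m+1)) k * UU m x k (Fin.last (m+1)) =
      (fun j : ℕ => (if j ≤ m then -(x⁻¹)^(m-j) else 0) * (-x⁻¹)^(m+1-j)) (k:ℕ) := by
    intro k
    simp only [BB, UU, Matrix.of_apply, Fin.val_last]
    rw [if_neg (by omega : ¬ m+1 ≤ m), if_pos (by omega : (k:ℕ) ≤ m+1)]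
  rw [Finset.sum_congr rfl (fun k _ => key k)]
  rw [Fin.sum_univ_eq_sum_range (fun j : ℕ => (if j ≤ m then -(x⁻¹)^(m-j) else 0) * (-x⁻¹)^(m+1-j)) (m+2)]
  rw [Finset.sum_range_succ]
  rw [if_neg (by omega : ¬ m+1 ≤ m), zero_mul, add_zero]
  have step1 : ∀ j ∈ Finset.range (m+1),
      (if j ≤ m then -(x⁻¹)^(m-j) else 0) * (-x⁻¹)^(m+1-j) =
      (fun t : ℕ => -(x⁻¹)^t * (-x⁻¹)^(t+1)) (m+1-1-j) := by
    intro j hj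
    rw [Finset.mem_range] at hj
    have hjm : j ≤ m := by omega
    rw [if_pos hjm]
    have e1 : m+1-1-j = m-j := by omega
    have e2 : m+1-j = (m-j)+1 := by omega
    rw [e1, e2]
  rw [Finset.sum_congr rfl step1]
  rw [Finset.sum_range_reflect (fun t : ℕ => -(x⁻¹)^t * (-x⁻¹)^(t+1)) (m+1)]
  rw [Finset.mul_sum]
  apply Finset.sum_congr rfl
  intro t _
  rw [neg_pow (x⁻¹) (t+1), neg_pow ((x⁻¹)^2) t]
  ring

lemma detT (m : ℕ) (x : ℂ) (hx : x ≠ 0) :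
    (toeplitzT (m+2) x).det = x^m * ∑ t ∈ Finset.range (m+1), (-((x⁻¹)^2))^t := by
  have h1 : (((1 : Matrix (Fin (m+2)) (Fin (m+2)) ℂ) + NN m x) * toeplitzT (m+2) x * UU m x).det
      = (BB m x * UU m x).det := by rw [hB m x hx]
  rw [Matrix.det_mul, Matrix.det_mul, detE, detU, one_mul, mul_one] at h1
  rw [h1]
  rw [Matrix.det_of_lowerTriangular _ (fun i j hij => BU_entry_upper m x hx i j hij)]
  rw [Fin.prod_univ_castSucc]
  have h2 : ∀ i : Fin (m+1), (BB m x * UU m x) i.castSucc i.castSucc = x := by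
    intro i
    exact BU_diag m x i.castSucc (by simp; omega)
  rw [Finset.prod_congr rfl (fun i _ => h2 i), Finset.prod_const, Finset.card_univ,
    Fintype.card_fin, BU_last m x hx]
  rw [← mul_assoc, pow_succ, mul_assoc (x^m) x x⁻¹, mul_inv_cancel₀ hx, mul_one]

end Stmt14Aux

/-- For `2 ≤ s ≤ n` and `x ∉ {0, i, -i}`, the leading `s×s` principal minor of
`T_n(x)` satisfies `(x²+1)·x^(s-2)·det = (x²)^(s-1) + (-1)^s`. -/
theorem stmt14 (n s : ℕ) (x : ℂ) (hx : x ≠ 0) (hx2 : x ^ 2 ≠ -1)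
    (h2 : 2 ≤ s) (hsn : s ≤ n) :
    (x ^ 2 + 1) * x ^ (s - 2) *
      ((toeplitzT n x).submatrix (Fin.castLE hsn) (Fin.castLE hsn)).det =
      (x ^ 2) ^ (s - 1) + (-1 : ℂ) ^ s := by
  obtain ⟨m, rfl⟩ : ∃ m, s = m + 2 := ⟨s - 2, by omega⟩
  have hsub : (toeplitzT n x).submatrix (Fin.castLE hsn) (Fin.castLE hsn) = toeplitzT (m+2) x := by
    ext i j
    rfl
  rw [hsub, Stmt14Aux.detT m x hx]
  have e1 : m + 2 - 2 = m := by omega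
  have e2 : m + 2 - 1 = m + 1 := by omega
  rw [e1, e2]
  set S := ∑ t ∈ Finset.range (m+1), (-((x⁻¹)^2))^t with hSdef
  have hS : x^(2*m) * S = (-1:ℂ)^m * ∑ u ∈ Finset.range (m+1), (-(x^2))^u := by
    rw [hSdef, Finset.mul_sum, Finset.mul_sum,
      ← Finset.sum_range_reflect (fun u => (-1:ℂ)^m * (-(x^2))^u) (m+1)]
    apply Finset.sum_congr rfl
    intro t ht
    rw [Finset.mem_range] at ht
    have e : m+1-1-t = m-t := by omega
    rw [e]
    obtain ⟨u, hu⟩ : ∃ u, m = t + u := ⟨m - t, by omega⟩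
    subst hu
    have e3 : t + u - t = u := by omega
    rw [e3]
    have hev : ((-1:ℂ))^(u*2) = 1 := Even.neg_one_pow ⟨u, by omega⟩
    field_simp
    have hxt : x^(2*t) * (x⁻¹)^(2*t) = 1 := by
      rw [← mul_pow, mul_inv_cancel₀ hx, one_pow]
    rw [neg_pow, neg_pow (x^2), one_div]
    linear_combination ((-1:ℂ)^t * x^(2*u)) * hxt - ((-1:ℂ)^t * x^(2*u)) * hev
  have hg' := geom_sum_mul (-(x^2)) (m+1)
  calc (x^2+1) * x^m * (x^m * S)
      = (x^2+1) * (x^(2*m) * S) := by ring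
    _ = (x^2+1) * ((-1:ℂ)^m * ∑ u ∈ Finset.range (m+1), (-(x^2))^u) := by rw [hS]
    _ = (x^2)^(m+1) + (-1:ℂ)^(m+2) := by
        have hev : ((-1:ℂ))^(m*2) = 1 := Even.neg_one_pow ⟨m, by omega⟩
        linear_combination ((-1:ℂ)^(m+1)) * hg' + (x^2*x^(m*2)) * hev
end

section
/- For the n×n skew-symmetric matrix K with entries k_{i,j} = 1 for i < j and k_{i,j} = −1 for i > j, every principal minor of even size s ≥ 2 equals 1. -/
open scoped Classical

/-- The skew-symmetric matrix with `1`'s above the diagonal and `-1`'s below. -/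
noncomputable def oneWedge (n : ℕ) : Matrix (Fin n) (Fin n) ℂ :=
  Matrix.of fun i j =>
    if (i : ℕ) < (j : ℕ) then 1 else if (j : ℕ) < (i : ℕ) then -1 else 0

/-!
Restricting `oneWedge n` to an increasing family of indices gives `oneWedge m` again, so every
principal minor of size `s` is `det (oneWedge s)`. Splitting off the last two indices,
`oneWedge (m + 2)` has diagonal blocks `oneWedge m`, `oneWedge 2` and constant off-diagonal
blocks `1`, `-1`. The Schur complement of `oneWedge 2` is `oneWedge m` itself, since the entries
of `(oneWedge 2)⁻¹ = -oneWedge 2` sum to `0`, and `det (oneWedge 2) = 1`; hence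
`det (oneWedge (m + 2)) = det (oneWedge m)`, and by induction every even size gives `1`.
-/

open Matrix

lemma oneWedge_submatrix_of_strictMono {m n : ℕ} {f : Fin m → Fin n} (hf : StrictMono f) :
    (oneWedge n).submatrix f f = oneWedge m := by
  ext i j
  simp only [oneWedge, submatrix_apply, of_apply, ← Fin.lt_def, hf.lt_iff_lt]

lemma oneWedge_two_mul_self : oneWedge 2 * oneWedge 2 = -1 := by
  ext i j
  fin_cases i <;> fin_cases j <;> simp [oneWedge, mul_apply, Fin.sum_univ_two]

noncomputable instance : Invertible (oneWedge 2) :=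
  ⟨-oneWedge 2, by rw [neg_mul, oneWedge_two_mul_self, neg_neg],
    by rw [mul_neg, oneWedge_two_mul_self, neg_neg]⟩

lemma invOf_oneWedge_two : ⅟(oneWedge 2) = -oneWedge 2 := rfl

lemma det_oneWedge_two : (oneWedge 2).det = 1 := by
  simp [det_fin_two, oneWedge]

lemma oneWedge_add_two_submatrix_finSumFinEquiv (m : ℕ) :
    (oneWedge (m + 2)).submatrix finSumFinEquiv finSumFinEquiv =
      fromBlocks (oneWedge m) (of fun _ _ => 1) (of fun _ _ => -1) (oneWedge 2) := by
  ext (i | i) (j | j)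
  · exact congr_fun₂ (oneWedge_submatrix_of_strictMono (Fin.strictMono_castAdd 2)) i j
  · have : (i : ℕ) < m + j := by omega
    simp only [oneWedge, submatrix_apply, of_apply, fromBlocks_apply₁₂, finSumFinEquiv_apply_left,
      finSumFinEquiv_apply_right, Fin.val_castAdd, Fin.val_natAdd, if_pos this]
  · have : (j : ℕ) < m + i := by omega
    simp only [oneWedge, submatrix_apply, of_apply, fromBlocks_apply₂₁, finSumFinEquiv_apply_left,
      finSumFinEquiv_apply_right, Fin.val_castAdd, Fin.val_natAdd, if_neg this.not_gt, if_pos this]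
  · exact congr_fun₂ (oneWedge_submatrix_of_strictMono (Fin.strictMono_natAdd m)) i j

lemma det_oneWedge_add_two (m : ℕ) : (oneWedge (m + 2)).det = (oneWedge m).det := by
  have hschur : (of fun _ _ => 1 : Matrix (Fin m) (Fin 2) ℂ) * ⅟(oneWedge 2) *
      (of fun _ _ => -1 : Matrix (Fin 2) (Fin m) ℂ) = 0 := by
    rw [invOf_oneWedge_two]
    ext i j
    simp [mul_apply, Fin.sum_univ_two, oneWedge]
  rw [← det_submatrix_equiv_self finSumFinEquiv, oneWedge_add_two_submatrix_finSumFinEquiv,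
    det_fromBlocks₂₂, hschur, sub_zero, det_oneWedge_two, one_mul]

lemma det_oneWedge_of_even {m : ℕ} (hm : Even m) : (oneWedge m).det = 1 := by
  obtain ⟨k, rfl⟩ := hm
  induction k with
  | zero => simp
  | succ k ih => rw [show k + 1 + (k + 1) = k + k + 2 by ring, det_oneWedge_add_two, ih]

theorem stmt16_general (n : ℕ) (S : Finset (Fin n)) (he : Even S.card) :
    pminor (oneWedge n) S = 1 := by
  let e : Fin S.card ≃ S := (S.orderIsoOfFin rfl).toEquiv
  have hsub : ((oneWedge n).submatrix ((↑) : S → Fin n) (↑)).submatrix e e = oneWedge S.card := by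
    rw [submatrix_submatrix]
    exact oneWedge_submatrix_of_strictMono (S.orderEmbOfFin rfl).strictMono
  rw [pminor, ← det_submatrix_equiv_self e, hsub, det_oneWedge_of_even he]

/-- Every even-sized principal minor (of size `≥ 2`) of the skew-symmetric
all-ones matrix equals `1`. -/
theorem stmt16 (n : ℕ) (S : Finset (Fin n)) (h2 : 2 ≤ S.card) (he : Even S.card) :
    pminor (oneWedge n) S = 1 :=
  stmt16_general n S he
end

section
/- Let A be an n×n matrix with all cycle-sums of all sizes equal to zero (C_S(A) = 0 for all nonempty S ⊆ {1,...,n}). Then A is permutation-conjugate to a strictly upper triangular matrix, i.e. there exists a permutation matrix P such that P A P^{-1} is strictly upper triangular. -/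
/-!
Call a permutation `σ` that is cyclic on `S`, fixes everything outside `S` and has
`A i (σ i) ≠ 0` for all `i ∈ S` a directed cycle of `A` on `S`. Its term in `C_S(A)` is nonzero,
so `C_S(A) = 0` forces a second directed cycle `τ ≠ σ` on `S`; stepping from a point `v` with
`σ v ≠ τ v` along `σ` and returning along `τ` closes a directed cycle on fewer vertices. By
induction on `|S|` the digraph of nonzero entries of `A` therefore has no cycles, so it is well
founded, and listing the indices in increasing rank yields the permutation.
-/

open scoped Classical

/-- The permutation matrix `P_σ = [e_{σ(1)}, …, e_{σ(n)}]`. -/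
noncomputable def permMat {n : ℕ} (σ : Equiv.Perm (Fin n)) : Matrix (Fin n) (Fin n) ℂ :=
  Matrix.of fun i j => if i = σ j then 1 else 0

open Equiv Function

section DirectedCycle

variable {α : Type*} {r : α → α → Prop}

structure IsDirectedCycle (r : α → α → Prop) (S : Finset α) (σ : Perm α) : Prop where
  isCycleOn : σ.IsCycleOn S
  apply_eq_self : ∀ x ∉ S, σ x = x
  rel : ∀ x ∈ S, r x (σ x)

theorem IsDirectedCycle.inv {S : Finset α} {σ : Perm α} (h : IsDirectedCycle (flip r) S σ) :
    IsDirectedCycle r S σ⁻¹ where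
  isCycleOn := h.isCycleOn.inv
  apply_eq_self x hx := Perm.inv_eq_iff_eq.mpr (h.apply_eq_self x hx).symm
  rel x hx := by
    simpa [flip] using h.rel (σ⁻¹ x) (h.isCycleOn.inv.1.mapsTo hx)

theorem IsDirectedCycle.exists_of_isPeriodicPt {g : α → α} {y : α} {m : ℕ} (hm : 0 < m)
    (hy : IsPeriodicPt g m y) (hr : ∀ k, r (g^[k] y) (g^[k + 1] y)) :
    ∃ S σ, y ∈ S ∧ S.card ≤ m ∧ IsDirectedCycle r S σ := by
  set L := (List.range (minimalPeriod g y)).map (g^[·] y)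
  have hL : L.Nodup := Cycle.nodup_coe_iff.mp nodup_periodicOrbit
  refine ⟨L.toFinset, L.formPerm, ?_, ?_, ⟨?_, ?_, ?_⟩⟩
  · simpa [L] using ⟨0, hy.minimalPeriod_pos hm, rfl⟩
  · exact (List.toFinset_card_le L).trans (by simpa [L] using hy.minimalPeriod_le hm)
  · rw [List.coe_toFinset]
    exact hL.isCycleOn_formPerm
  · exact fun x hx => List.formPerm_apply_of_notMem (by simpa using hx)
  · intro x hx
    obtain ⟨i, hi, rfl⟩ := List.mem_iff_getElem.mp (List.mem_toFinset.mp hx)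
    rw [List.formPerm_apply_getElem L hL i hi]
    simpa only [L, List.getElem_map, List.getElem_range, List.length_map, List.length_range,
      iterate_mod_minimalPeriod_eq] using hr i

theorem Equiv.Perm.IsCycleOn.exists_isPeriodicPt_update {τ : Perm α} {S : Finset α}
    (hτ : τ.IsCycleOn S) {v w : α} (hv : v ∈ S) (hw : w ∈ S) (hwv : w ≠ τ v) :
    ∃ m, 0 < m ∧ m < S.card ∧ IsPeriodicPt (update τ v w) m v := by
  have hreturn : ∃ k, (τ ^ k) w = v := (hτ.exists_pow_eq hw hv).imp fun _ => And.right
  set k := Nat.find hreturn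
  have hiter : ∀ i ≤ k, (update τ v w)^[i + 1] v = (τ ^ i) w := by
    intro i hi
    induction i with
    | zero => simp
    | succ i ih =>
      have hne : (τ ^ i) w ≠ v := Nat.find_min hreturn (by omega)
      rw [iterate_succ_apply', ih (by omega), update_of_ne hne, pow_succ', Perm.mul_apply]
  have hk : k + 1 < S.card := by
    obtain ⟨j, hj, hjv⟩ := hτ.exists_pow_eq hw hv
    have hkj : k ≤ j := Nat.find_min' hreturn hjv
    refine lt_of_le_of_ne (by omega) fun hcard => hwv ?_
    rw [← hτ.pow_card_apply hw, ← hcard, pow_succ', Perm.mul_apply, Nat.find_spec hreturn]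
  exact ⟨k + 1, k.succ_pos, hk, (hiter k le_rfl).trans (Nat.find_spec hreturn)⟩

theorem IsDirectedCycle.exists_card_lt_of_ne {S : Finset α} {σ τ : Perm α}
    (hσ : IsDirectedCycle r S σ) (hτ : IsDirectedCycle r S τ) (hne : σ ≠ τ) :
    ∃ S' ρ, S'.Nonempty ∧ S'.card < S.card ∧ IsDirectedCycle r S' ρ := by
  obtain ⟨v, hv⟩ := not_forall.mp fun h => hne (Equiv.ext h)
  have hvS : v ∈ S := by
    by_contra hvS
    exact hv ((hσ.apply_eq_self v hvS).trans (hτ.apply_eq_self v hvS).symm)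
  have hσv : σ v ∈ S := hσ.isCycleOn.1.mapsTo hvS
  set g := update τ v (σ v)
  have hg : ∀ x ∈ S, g x ∈ S ∧ r x (g x) := fun x hx => by
    by_cases hxv : x = v
    · subst hxv
      simpa [g] using ⟨hσv, hσ.rel x hx⟩
    · simpa [g, hxv] using ⟨hτ.isCycleOn.1.mapsTo hx, hτ.rel x hx⟩
  have hgS : Set.MapsTo g S S := fun x hx => (hg x hx).1
  obtain ⟨m, hm, hmS, hper⟩ := hτ.isCycleOn.exists_isPeriodicPt_update hvS hσv hv
  obtain ⟨S', ρ, hvS', hcard, hρ⟩ := exists_of_isPeriodicPt hm hper fun i => by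
    rw [iterate_succ_apply']
    exact (hg _ (hgS.iterate i hvS)).2
  exact ⟨S', ρ, ⟨v, hvS'⟩, hcard.trans_lt hmS, hρ⟩

theorem Function.exists_isPeriodicPt_iterate [Finite α] (g : α → α) (x : α) :
    ∃ a, ∃ m > 0, IsPeriodicPt g m (g^[a] x) := by
  obtain ⟨a, b, hab, heq⟩ := Set.Finite.exists_lt_map_eq_of_forall_mem (f := (g^[·] x))
    (fun _ => Set.mem_univ _) Set.finite_univ
  refine ⟨a, b - a, by omega, ?_⟩
  rw [IsPeriodicPt, IsFixedPt, ← iterate_add_apply, Nat.sub_add_cancel hab.le]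
  exact heq.symm

theorem wellFounded_of_forall_not_isDirectedCycle [Finite α]
    (h : ∀ S σ, S.Nonempty → ¬IsDirectedCycle r S σ) : WellFounded r := by
  refine WellFounded.wellFounded_iff_has_min.mpr fun s ⟨x, hx⟩ => ?_
  by_contra! hno
  choose! g hgs hgr using hno
  obtain ⟨a, m, hm, hper⟩ := exists_isPeriodicPt_iterate g x
  obtain ⟨S, σ, hS, -, hσ⟩ := IsDirectedCycle.exists_of_isPeriodicPt (r := flip r) hm hper
    fun k => by
      rw [← iterate_add_apply, ← iterate_add_apply, add_right_comm, iterate_succ_apply']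
      exact hgr _ (Set.MapsTo.iterate hgs _ hx)
  exact h S σ⁻¹ ⟨_, hS⟩ hσ.inv

end DirectedCycle

theorem Fin.exists_perm_lt_of_rel_of_wellFounded {n : ℕ} {r : Fin n → Fin n → Prop}
    (hr : WellFounded r) : ∃ σ : Perm (Fin n), ∀ i j, r (σ i) (σ j) → i < j := by
  have : IsWellFounded (Fin n) r := ⟨hr⟩
  refine ⟨Tuple.sort (IsWellFounded.rank r), fun i j hij => ?_⟩
  by_contra! hji
  exact (Tuple.monotone_sort (IsWellFounded.rank r) hji).not_gt (IsWellFounded.rank_lt_of_rel hij)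

section CycleSum

variable {n : ℕ} (A : Matrix (Fin n) (Fin n) ℂ)

theorem IsDirectedCycle.exists_ne_of_cycleSum_eq_zero {S : Finset (Fin n)} {σ : Perm (Fin n)}
    (hσ : IsDirectedCycle (A · · ≠ 0) S σ) (hS : cycleSum A S = 0) :
    ∃ τ ≠ σ, IsDirectedCycle (A · · ≠ 0) S τ := by
  by_contra! hno
  refine Finset.prod_ne_zero_iff.mpr hσ.rel ?_
  rw [← hS, cycleSum, Finset.sum_eq_single_of_mem σ ?mem ?others]
  case mem => simpa using ⟨hσ.isCycleOn, hσ.apply_eq_self⟩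
  case others =>
    intro τ hτ hτσ
    simp only [Finset.mem_filter, Finset.mem_univ, true_and] at hτ
    by_contra hτprod
    exact hno τ hτσ ⟨hτ.1, hτ.2, Finset.prod_ne_zero_iff.mp hτprod⟩

theorem not_isDirectedCycle_of_cycleSum_eq_zero
    (h : ∀ S : Finset (Fin n), S.Nonempty → cycleSum A S = 0)
    (S : Finset (Fin n)) (σ : Perm (Fin n)) (hS : S.Nonempty) :
    ¬IsDirectedCycle (A · · ≠ 0) S σ := by
  induction hcard : S.card using Nat.strong_induction_on generalizing S σ with
  | _ m ih =>
    intro hσ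
    obtain ⟨τ, hτσ, hτ⟩ := hσ.exists_ne_of_cycleSum_eq_zero A (h S hS)
    obtain ⟨S', ρ, hS', hlt, hρ⟩ := hσ.exists_card_lt_of_ne hτ hτσ.symm
    exact ih _ (hcard ▸ hlt) S' ρ hS' rfl hρ

end CycleSum

theorem permMat_eq_permMatrix {n : ℕ} (σ : Perm (Fin n)) : permMat σ = σ⁻¹.permMatrix ℂ := by
  ext i j
  simp [permMat, PEquiv.toMatrix_apply, Perm.inv_def, Equiv.symm_apply_eq, eq_comm (a := i)]

theorem permMat_mul_mul_inv_permMat_apply {n : ℕ} (σ : Perm (Fin n))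
    (A : Matrix (Fin n) (Fin n) ℂ) (i j : Fin n) :
    (permMat σ * A * (permMat σ)⁻¹) i j = A (σ⁻¹ i) (σ⁻¹ j) := by
  have hinv : (permMat σ)⁻¹ = σ.permMatrix ℂ := by
    refine Matrix.inv_eq_right_inv ?_
    rw [permMat_eq_permMatrix, ← Matrix.permMatrix_mul, mul_inv_cancel, Matrix.permMatrix_one]
  rw [hinv, permMat_eq_permMatrix, PEquiv.toMatrix_toPEquiv_mul, PEquiv.mul_toMatrix_toPEquiv]
  rfl

/-- A matrix all of whose cycle-sums vanish is permutation-conjugate to a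
strictly upper triangular matrix. -/
theorem stmt18 (n : ℕ) (A : Matrix (Fin n) (Fin n) ℂ)
    (h : ∀ S : Finset (Fin n), S.Nonempty → cycleSum A S = 0) :
    ∃ σ : Equiv.Perm (Fin n), ∀ i j : Fin n, j ≤ i →
      (permMat σ * A * (permMat σ)⁻¹) i j = 0 := by
  obtain ⟨σ, hσ⟩ := Fin.exists_perm_lt_of_rel_of_wellFounded
    (wellFounded_of_forall_not_isDirectedCycle (not_isDirectedCycle_of_cycleSum_eq_zero A h))
  refine ⟨σ⁻¹, fun i j hji => ?_⟩
  rw [permMat_mul_mul_inv_permMat_apply, inv_inv]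
  by_contra hne
  exact hji.not_gt (hσ i j hne)
end
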